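/- arXiv:2104.01990 — 4 statements merged into one kernel-verified Lean document; each statement's English description precedes it below -/
import Mathlib

section
/- Let 𝕃 = {(s,λ) ∈ ℂ × ℂ : Re λ > 0 and λ(j − s) ≠ (2k+1)πi for all integers j ≥ 1 and all k ∈ ℤ}. For j ≥ 1 set q_j(s,λ,z) = e^z / (e^{λ(j−s)} + 1), and let Φ_n(s,λ) = q_1(s,λ, q_2(s,λ, …, q_n(s,λ, 0)…)) be the n-fold nested composition evaluated at z = 0. Then there exists a function β : ℂ × ℂ → ℂ, holomorphic on 𝕃 (complex differentiable in each of the variables s and λ at every point of 𝕃), such that Φ_n converges to β uniformly on every compact subset of 𝕃 as n → ∞. -/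
open Complex Filter Topology
open scoped ENNReal NNReal

/-- The set 𝕃 of pairs (s, λ) with Re λ > 0 and λ(j − s) ≠ (2k+1)πi
for all integers j ≥ 1 and all k ∈ ℤ. -/
def Lset : Set (ℂ × ℂ) :=
  {p | 0 < p.2.re ∧ ∀ j : ℕ, 1 ≤ j → ∀ k : ℤ,
    p.2 * ((j : ℂ) - p.1) ≠ (2 * (k : ℂ) + 1) * (Real.pi : ℂ) * Complex.I}

/-- `qnest s lam j k` is the nested composition `q_j(s,λ, q_{j+1}(s,λ, …, q_{j+k-1}(s,λ,0)…))`
where `q_j(s,λ,z) = e^z / (e^{λ(j−s)} + 1)`. -/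
noncomputable def qnest (s lam : ℂ) : ℕ → ℕ → ℂ
  | _, 0 => 0
  | j, k + 1 => Complex.exp (qnest s lam (j + 1) k) /
      (Complex.exp (lam * ((j : ℂ) - s)) + 1)

/-- `Phi n s lam = q_1(s,λ, q_2(s,λ, …, q_n(s,λ, 0)…))`. -/
noncomputable def Phi (n : ℕ) (s lam : ℂ) : ℂ := qnest s lam 1 n

/-! Write `d_j = e^{λ(j−s)} + 1`, so that `Φ_n` nests the maps `z ↦ e^z / d_j`. On a compact
subset of 𝕃 the `|d_j|` are bounded below by a positive constant and grow like `e^{j a}`, where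
`a > 0` is the minimum of `Re λ`. The nested values are therefore bounded by some `B`, and for
`j` so large that `|d_j| ≥ 2 e^B` the maps `z ↦ e^z / d_j` are `1/2`-contractions on the disc of
radius `B`; hence `|Φ_{n+1} − Φ_n| = O(2^{-n})` uniformly. Uniform convergence on compacta of the
open set 𝕃 is locally uniform convergence, so the limit is holomorphic in each variable. -/

noncomputable def expNest (d : ℕ → ℂ) : ℕ → ℕ → ℂ
  | _, 0 => 0
  | j, k + 1 => exp (expNest d (j + 1) k) / d j

lemma expNest_succ (d : ℕ → ℂ) (j k : ℕ) :
    expNest d j (k + 1) = exp (expNest d (j + 1) k) / d j := rfl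

lemma norm_exp_sub_exp_le {u v : ℂ} {B : ℝ} (hu : ‖u‖ ≤ B) (hv : ‖v‖ ≤ B) :
    ‖exp u - exp v‖ ≤ Real.exp B * ‖u - v‖ :=
  Convex.norm_image_sub_le_of_norm_deriv_le (s := Metric.closedBall 0 B)
    (fun x _ => differentiable_exp x)
    (fun x hx => by
      rw [Complex.deriv_exp]
      exact (norm_exp_le_exp_norm x).trans (Real.exp_le_exp.2 (by simpa using hx)))
    (convex_closedBall _ _) (by simpa using hv) (by simpa using hu)

section expNest

variable {d : ℕ → ℂ}

lemma norm_expNest_succ_le (j k : ℕ) :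
    ‖expNest d j (k + 1)‖ ≤ Real.exp ‖expNest d (j + 1) k‖ / ‖d j‖ := by
  rw [expNest_succ, norm_div]
  gcongr
  exact norm_exp_le_exp_norm _

lemma norm_expNest_le_one {J : ℕ} (hd : ∀ j ≥ J, Real.exp 1 ≤ ‖d j‖) (k : ℕ) :
    ∀ j ≥ J, ‖expNest d j k‖ ≤ 1 := by
  induction k with
  | zero => simp [expNest]
  | succ k ih =>
    intro j hj
    calc ‖expNest d j (k + 1)‖ ≤ Real.exp ‖expNest d (j + 1) k‖ / ‖d j‖ := norm_expNest_succ_le j k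
      _ ≤ Real.exp 1 / ‖d j‖ := by gcongr; exact ih (j + 1) (by omega)
      _ ≤ 1 := div_le_one_of_le₀ (hd j hj) (norm_nonneg _)

lemma exists_bound_norm_expNest {c : ℝ} (hc : 0 < c) (J : ℕ) :
    ∃ B, ∀ d : ℕ → ℂ, (∀ j ≥ 1, c ≤ ‖d j‖) → (∀ j ≥ J, Real.exp 1 ≤ ‖d j‖) →
      ∀ j ≥ 1, ∀ k, ‖expNest d j k‖ ≤ B := by
  suffices h : ∀ n, ∃ B, 0 ≤ B ∧ ∀ d : ℕ → ℂ, (∀ j ≥ 1, c ≤ ‖d j‖) →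
      (∀ j ≥ J, Real.exp 1 ≤ ‖d j‖) → ∀ j ≥ 1, J ≤ j + n → ∀ k, ‖expNest d j k‖ ≤ B by
    obtain ⟨B, -, hB⟩ := h J
    exact ⟨B, fun d hdc hdJ j hj => hB d hdc hdJ j hj (by omega)⟩
  intro n
  induction n with
  | zero => exact ⟨1, zero_le_one, fun d _ hdJ j _ hjJ k => norm_expNest_le_one hdJ k j hjJ⟩
  | succ n ih =>
    obtain ⟨B, hB0, hB⟩ := ih
    refine ⟨max B (Real.exp B / c), hB0.trans (le_max_left _ _), fun d hdc hdJ j hj hjn k => ?_⟩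
    rcases k with _ | k
    · simpa [expNest] using hB0.trans (le_max_left _ _)
    calc ‖expNest d j (k + 1)‖ ≤ Real.exp ‖expNest d (j + 1) k‖ / ‖d j‖ := norm_expNest_succ_le j k
      _ ≤ Real.exp B / c := by
        gcongr
        · exact hB d hdc hdJ (j + 1) (by omega) (by omega) k
        · exact hdc j hj
      _ ≤ max B (Real.exp B / c) := le_max_right _ _

-- Each of the first `J` steps expands differences by at most `e^B / c`, each later one
-- contracts them by `1/2`.
lemma norm_expNest_sub_le {B c : ℝ} {J : ℕ} (hc : 0 < c) (hdc : ∀ j ≥ 1, c ≤ ‖d j‖)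
    (hB : ∀ j ≥ 1, ∀ k, ‖expNest d j k‖ ≤ B) (hdJ : ∀ j ≥ J, 2 * Real.exp B ≤ ‖d j‖) (k : ℕ) :
    ∀ j ≥ 1, ‖expNest d j (k + 1) - expNest d j k‖ ≤
      (2 * max 1 (Real.exp B / c)) ^ (J - j) / c * (1 / 2) ^ k := by
  set L := max 1 (Real.exp B / c)
  have hL : 1 ≤ 2 * L := by linarith [le_max_left 1 (Real.exp B / c)]
  have hd0 : ∀ j ≥ 1, 0 < ‖d j‖ := fun j hj => hc.trans_le (hdc j hj)
  induction k with
  | zero =>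
    intro j hj
    calc ‖expNest d j (0 + 1) - expNest d j 0‖ = 1 / ‖d j‖ := by simp [expNest]
      _ ≤ 1 / c := by gcongr; exact hdc j hj
      _ ≤ (2 * L) ^ (J - j) / c * (1 / 2) ^ 0 := by
        rw [pow_zero, mul_one]; gcongr; exact one_le_pow₀ hL
  | succ k ih =>
    intro j hj
    have hlip : ‖expNest d j (k + 2) - expNest d j (k + 1)‖ ≤
        Real.exp B / ‖d j‖ * ‖expNest d (j + 1) (k + 1) - expNest d (j + 1) k‖ := by
      rw [expNest_succ d j (k + 1), expNest_succ d j k, ← sub_div, norm_div, div_mul_eq_mul_div]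
      gcongr
      exact norm_exp_sub_exp_le (hB (j + 1) (by omega) _) (hB (j + 1) (by omega) _)
    have hrate : Real.exp B / ‖d j‖ * (2 * L) ^ (J - (j + 1)) ≤ (2 * L) ^ (J - j) * (1 / 2) := by
      rcases le_or_gt J j with hJj | hJj
      · rw [show J - j = 0 by omega, show J - (j + 1) = 0 by omega, pow_zero, mul_one, one_mul,
          div_le_iff₀ (hd0 j hj)]
        linarith [hdJ j hJj]
      · rw [show J - j = J - (j + 1) + 1 by omega, pow_succ, mul_comm]
        have : Real.exp B / ‖d j‖ ≤ L :=
          (div_le_div_of_nonneg_left (Real.exp_pos B).le hc (hdc j hj)).trans (le_max_right _ _)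
        nlinarith [pow_nonneg (by linarith : (0 : ℝ) ≤ 2 * L) (J - (j + 1))]
    calc ‖expNest d j (k + 1 + 1) - expNest d j (k + 1)‖
        ≤ Real.exp B / ‖d j‖ * ((2 * L) ^ (J - (j + 1)) / c * (1 / 2) ^ k) := by
          refine hlip.trans ?_
          gcongr
          exact ih (j + 1) (by omega)
      _ = Real.exp B / ‖d j‖ * (2 * L) ^ (J - (j + 1)) / c * (1 / 2) ^ k := by ring
      _ ≤ (2 * L) ^ (J - j) * (1 / 2) / c * (1 / 2) ^ k := by gcongr
      _ = (2 * L) ^ (J - j) / c * (1 / 2) ^ (k + 1) := by ring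

end expNest

lemma differentiableAt_expNest {E : Type*} [NormedAddCommGroup E] [NormedSpace ℂ E]
    {D : E → ℕ → ℂ} {x : E} (hD : ∀ i, DifferentiableAt ℂ (fun y => D y i) x) (k : ℕ) :
    ∀ j, (∀ i ≥ j, D x i ≠ 0) → DifferentiableAt ℂ (fun y => expNest (D y) j k) x := by
  induction k with
  | zero => simp [expNest]
  | succ k ih =>
    intro j hj
    simp only [expNest_succ, div_eq_mul_inv]
    exact (ih (j + 1) fun i hi => hj i (by omega)).cexp.mul ((hD j).inv (hj j le_rfl))

lemma differentiableAt_comp_of_tendstoLocallyUniformlyOn {E G : Type*} [NormedAddCommGroup E]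
    [NormedSpace ℂ E] [NormedAddCommGroup G] [NormedSpace ℂ G] [CompleteSpace G]
    {F : ℕ → E → G} {f : E → G} {Ω : Set E} (hΩ : IsOpen Ω)
    (hF : TendstoLocallyUniformlyOn F f atTop Ω) (hFd : ∀ n, ∀ x ∈ Ω, DifferentiableAt ℂ (F n) x)
    {g : ℂ → E} (hg : Differentiable ℂ g) {z : ℂ} (hz : g z ∈ Ω) :
    DifferentiableAt ℂ (f ∘ g) z := by
  have hV : IsOpen (g ⁻¹' Ω) := hΩ.preimage hg.continuous
  have hFg := hF.comp g (Set.mapsTo_preimage g Ω) hg.continuous.continuousOn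
  refine (hFg.differentiableOn (Eventually.of_forall fun n w hw => ?_) hV).differentiableAt
    (hV.mem_nhds hz)
  exact ((hFd n _ hw).comp w (hg w)).differentiableWithinAt

lemma tendstoUniformlyOn_of_norm_sub_le {α F : Type*} [NormedAddCommGroup F] [CompleteSpace F]
    {f : ℕ → α → F} {u : ℕ → ℝ} {s : Set α} (hu : Summable u)
    (hfu : ∀ n, ∀ x ∈ s, ‖f (n + 1) x - f n x‖ ≤ u n) :
    TendstoUniformlyOn f (fun x => f 0 x + ∑' n, (f (n + 1) x - f n x)) atTop s := by
  have h := Metric.tendstoUniformlyOn_iff.1 (tendstoUniformlyOn_tsum_nat hu hfu)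
  refine Metric.tendstoUniformlyOn_iff.2 fun ε hε => ?_
  filter_upwards [h ε hε] with n hn x hx
  have hsum := Finset.sum_range_sub (fun n => f n x) n
  rw [← add_sub_cancel (f 0 x) (f n x), ← hsum, dist_add_left]
  exact hn x hx

noncomputable def qDenom (s lam : ℂ) (j : ℕ) : ℂ := exp (lam * (j - s)) + 1

lemma qnest_eq_expNest (s lam : ℂ) : qnest s lam = expNest (qDenom s lam) := by
  funext j k
  induction k generalizing j with
  | zero => rfl
  | succ k ih => rw [qnest, expNest, ih]; rfl

lemma differentiable_qDenom (j : ℕ) : Differentiable ℂ fun p : ℂ × ℂ => qDenom p.1 p.2 j := by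
  unfold qDenom
  fun_prop

lemma exp_add_one_ne_zero_iff {w : ℂ} :
    exp w + 1 ≠ 0 ↔ ∀ k : ℤ, w ≠ (2 * k + 1) * (Real.pi : ℂ) * I := by
  rw [ne_eq, add_eq_zero_iff_eq_neg, ← exp_pi_mul_I, exp_eq_exp_iff_exists_int, not_exists]
  refine forall_congr' fun k => not_congr ?_
  constructor <;> intro h <;> rw [h] <;> ring

lemma mem_Lset_iff {p : ℂ × ℂ} : p ∈ Lset ↔ 0 < p.2.re ∧ ∀ j ≥ 1, qDenom p.1 p.2 j ≠ 0 := by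
  simp only [Lset, qDenom, Set.mem_ofPred_eq, exp_add_one_ne_zero_iff]

lemma le_norm_qDenom {s lam : ℂ} {a C : ℝ} (ha : a ≤ lam.re) (hC : ‖lam * s‖ ≤ C) (j : ℕ) :
    Real.exp (j * a - C) - 1 ≤ ‖qDenom s lam j‖ := by
  have hre : (j : ℝ) * a - C ≤ (lam * (j - s)).re := by
    have h : (lam * (j - s)).re = j * lam.re - (lam * s).re := by simp [mul_sub, mul_re]; ring
    rw [h]
    nlinarith [re_le_norm (lam * s), (Nat.cast_nonneg j : (0 : ℝ) ≤ j)]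
  calc Real.exp (j * a - C) - 1 ≤ ‖exp (lam * (j - s))‖ - ‖(-1 : ℂ)‖ := by
        rw [norm_exp, norm_neg, norm_one]; gcongr
    _ ≤ ‖qDenom s lam j‖ := by simpa [qDenom] using norm_sub_norm_le (exp (lam * (j - s))) (-1)

lemma exists_le_norm_qDenom {U : Set (ℂ × ℂ)} (hU : IsCompact U) (hre : ∀ p ∈ U, 0 < p.2.re)
    (R : ℝ) : ∃ J : ℕ, ∀ p ∈ U, ∀ j ≥ J, R ≤ ‖qDenom p.1 p.2 j‖ := by
  obtain ⟨a, ha0, ha⟩ := hU.exists_forall_le' (continuous_re.comp continuous_snd).continuousOn hre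
  obtain ⟨C, hC⟩ := hU.exists_bound_of_continuousOn (continuous_snd.mul continuous_fst).continuousOn
  obtain ⟨J, hJ⟩ := exists_nat_gt ((R + 1 + C) / a)
  refine ⟨J, fun p hp j hj => ?_⟩
  have hja : R + 1 ≤ j * a - C := by
    rw [div_lt_iff₀ ha0] at hJ
    nlinarith [(Nat.cast_le.2 hj : (J : ℝ) ≤ j)]
  calc R ≤ Real.exp (j * a - C) - 1 := by linarith [Real.add_one_le_exp (j * a - C)]
    _ ≤ ‖qDenom p.1 p.2 j‖ := le_norm_qDenom (ha p hp) (hC p hp) j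

lemma isOpen_Lset : IsOpen Lset := by
  refine isOpen_iff_mem_nhds.2 fun p hp => ?_
  have hopen : IsOpen {q : ℂ × ℂ | 0 < q.2.re} :=
    isOpen_lt continuous_const (continuous_re.comp continuous_snd)
  obtain ⟨K, hKp, hKre, hK⟩ := local_compact_nhds (hopen.mem_nhds (mem_Lset_iff.1 hp).1)
  obtain ⟨J, hJ⟩ := exists_le_norm_qDenom hK hKre 1
  have hsmall : ∀ j ∈ Finset.Ico 1 J, ∀ᶠ q in 𝓝 p, qDenom q.1 q.2 j ≠ 0 := fun j hj =>
    (differentiable_qDenom j).continuous.continuousAt.eventually_ne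
      ((mem_Lset_iff.1 hp).2 j (Finset.mem_Ico.1 hj).1)
  filter_upwards [hKp, (eventually_all_finset _).2 hsmall] with q hqK hq
  refine mem_Lset_iff.2 ⟨hKre hqK, fun j hj => ?_⟩
  rcases lt_or_ge j J with h | h
  · exact hq j (Finset.mem_Ico.2 ⟨hj, h⟩)
  · exact norm_pos_iff.1 (one_pos.trans_le (hJ q hqK j h))

lemma exists_pos_le_norm_qDenom {U : Set (ℂ × ℂ)} (hU : IsCompact U) (hUL : U ⊆ Lset) :
    ∃ c > 0, ∀ p ∈ U, ∀ j ≥ 1, c ≤ ‖qDenom p.1 p.2 j‖ := by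
  obtain ⟨J, hJ⟩ := exists_le_norm_qDenom hU (fun p hp => (hUL hp).1) 1
  have hsmall : ∀ j ∈ Finset.Ico 1 J,
      ∀ᶠ c in 𝓝[>] (0 : ℝ), ∀ p ∈ U, c ≤ ‖qDenom p.1 p.2 j‖ := by
    intro j hj
    obtain ⟨c, hc0, hc⟩ :=
      hU.exists_forall_le' (differentiable_qDenom j).continuous.norm.continuousOn fun p hp => norm_pos_iff.2 ((mem_Lset_iff.1 (hUL hp)).2 j (Finset.mem_Ico.1 hj).1)
    filter_upwards [Ioc_mem_nhdsGT hc0] with c' hc' p hp using hc'.2.trans (hc p hp)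
  obtain ⟨c, hc, hcsmall⟩ :=
    (Eventually.and (Ioc_mem_nhdsGT one_pos) ((eventually_all_finset _).2 hsmall)).exists
  refine ⟨c, hc.1, fun p hp j hj => ?_⟩
  rcases lt_or_ge j J with h | h
  · exact hcsmall j (Finset.mem_Ico.2 ⟨hj, h⟩) p hp
  · exact hc.2.trans (hJ p hp j h)

lemma exists_norm_Phi_sub_le_geometric {U : Set (ℂ × ℂ)} (hU : IsCompact U) (hUL : U ⊆ Lset) :
    ∃ M, ∀ n, ∀ p ∈ U, ‖Phi (n + 1) p.1 p.2 - Phi n p.1 p.2‖ ≤ M * (1 / 2) ^ n := by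
  have hre : ∀ p ∈ U, 0 < p.2.re := fun p hp => (hUL hp).1
  obtain ⟨c, hc, hdc⟩ := exists_pos_le_norm_qDenom hU hUL
  obtain ⟨J₁, hJ₁⟩ := exists_le_norm_qDenom hU hre (Real.exp 1)
  obtain ⟨B, hB⟩ := exists_bound_norm_expNest hc J₁
  obtain ⟨J₂, hJ₂⟩ := exists_le_norm_qDenom hU hre (2 * Real.exp B)
  refine ⟨(2 * max 1 (Real.exp B / c)) ^ (J₂ - 1) / c, fun n p hp => ?_⟩
  simp only [Phi, qnest_eq_expNest]
  exact norm_expNest_sub_le hc (hdc p hp) (hB _ (hdc p hp) (hJ₁ p hp)) (hJ₂ p hp) n 1 le_rfl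

lemma differentiableAt_Phi {p : ℂ × ℂ} (hp : p ∈ Lset) (n : ℕ) :
    DifferentiableAt ℂ (fun q : ℂ × ℂ => Phi n q.1 q.2) p := by
  simp only [Phi, qnest_eq_expNest]
  exact differentiableAt_expNest (fun i => (differentiable_qDenom i).differentiableAt) n 1
    (mem_Lset_iff.1 hp).2

/-- the nested compositions `Φ_n` converge, uniformly on compact subsets
of 𝕃, to a function `β` holomorphic on 𝕃 (differentiable in each variable). -/
theorem beta_family_exists :
    ∃ β : ℂ × ℂ → ℂ,
      (∀ p ∈ Lset, DifferentiableAt ℂ (fun s => β (s, p.2)) p.1 ∧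
        DifferentiableAt ℂ (fun l => β (p.1, l)) p.2) ∧
      ∀ U : Set (ℂ × ℂ), IsCompact U → U ⊆ Lset →
        TendstoUniformlyOn (fun n (p : ℂ × ℂ) => Phi n p.1 p.2) β atTop U := by
  have hunif : ∀ U : Set (ℂ × ℂ), IsCompact U → U ⊆ Lset →
      TendstoUniformlyOn (fun n (p : ℂ × ℂ) => Phi n p.1 p.2)
        (fun p => Phi 0 p.1 p.2 + ∑' n, (Phi (n + 1) p.1 p.2 - Phi n p.1 p.2)) atTop U := by
    intro U hU hUL
    obtain ⟨M, hM⟩ := exists_norm_Phi_sub_le_geometric hU hUL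
    exact tendstoUniformlyOn_of_norm_sub_le (summable_geometric_two.mul_left M) hM
  have hloc := (tendstoLocallyUniformlyOn_iff_forall_isCompact isOpen_Lset).2
    fun K hKL hK => hunif K hK hKL
  have hPhi : ∀ n, ∀ q ∈ Lset, DifferentiableAt ℂ (fun q : ℂ × ℂ => Phi n q.1 q.2) q :=
    fun n q hq => differentiableAt_Phi hq n
  refine ⟨_, fun p hp => ⟨?_, ?_⟩, hunif⟩
  · exact differentiableAt_comp_of_tendstoLocallyUniformlyOn isOpen_Lset hloc hPhi
      (differentiable_id.prodMk (differentiable_const _)) hp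
  · exact differentiableAt_comp_of_tendstoLocallyUniformlyOn isOpen_Lset hloc hPhi
      ((differentiable_const _).prodMk differentiable_id) hp
end

section
/- Fix a real number λ > 0. For every s ∈ ℂ with Re s < 1 the limit β(s,λ) = lim_{n→∞} Φ_n(s,λ) exists, and β(s,λ) · e^{−λ(s−1)} → 1 as Re s → −∞, uniformly in Im s: for every ε > 0 there exists R ∈ ℝ such that |β(s,λ) e^{−λ(s−1)} − 1| < ε whenever Re s < R. In particular β(s,λ) → 0 as Re s → −∞. -/
open Complex Filter Topology

/-!
Write `D_j = e^{λ(j−s)} + 1` for the denominator of `q_j`. Once `‖D_j‖ ≥ 2e` for all `j ≥ J`,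
each such `q_j` maps the closed unit disc into itself and is `1/2`-Lipschitz there, so the tails
`q_j(q_{j+1}(…))` with `j ≥ J` are Cauchy; the finitely many outer maps are continuous, so `Φ_n`
converges too. For real `λ > 0` and `A = e^{λ(1−Re s)} − 1` we have `‖D_j‖ ≥ A` for all `j ≥ 1`.
Hence, once `A ≥ e`, the limit `u` of the tail starting at level 2 and `β = e^u / D_1` are both
`O(1/A)`, and `β e^{−λ(s−1)} − 1 = (e^u − 1) − β` because `e^{−λ(s−1)} = D_1 − 1`.
-/

theorem Complex.norm_exp_sub_exp_le {x y : ℂ} {r : ℝ} (hx : ‖x‖ ≤ r) (hy : ‖y‖ ≤ r) :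
    ‖exp x - exp y‖ ≤ Real.exp r * ‖x - y‖ :=
  (convex_closedBall (0 : ℂ) r).norm_image_sub_le_of_norm_deriv_le
    (fun z _ => differentiableAt_exp)
    (fun z hz => by
      rw [Complex.deriv_exp]
      exact (norm_exp_le_exp_norm z).trans
        (Real.exp_le_exp.2 (mem_closedBall_zero_iff.1 hz)))
    (mem_closedBall_zero_iff.2 hy) (mem_closedBall_zero_iff.2 hx)

noncomputable def qdenom (s lam : ℂ) (j : ℕ) : ℂ := exp (lam * (j - s)) + 1

section Nested

variable {s lam : ℂ}

theorem qnest_zero (j : ℕ) : qnest s lam j 0 = 0 := rfl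

theorem qnest_succ (j k : ℕ) :
    qnest s lam j (k + 1) = exp (qnest s lam (j + 1) k) / qdenom s lam j := rfl

theorem norm_qnest_le {j : ℕ} (hD : ∀ i ≥ j, Real.exp 1 ≤ ‖qdenom s lam i‖) (k : ℕ) :
    ‖qnest s lam j k‖ ≤ Real.exp 1 / ‖qdenom s lam j‖ := by
  induction k generalizing j with
  | zero => rw [qnest_zero, norm_zero]; positivity
  | succ k ih =>
    have hD' : ∀ i ≥ j + 1, Real.exp 1 ≤ ‖qdenom s lam i‖ := fun i hi => hD i (by omega)
    have hnext : ‖qnest s lam (j + 1) k‖ ≤ 1 :=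
      (ih hD').trans (div_le_one_of_le₀ (hD' _ le_rfl) (norm_nonneg _))
    rw [qnest_succ, norm_div]
    gcongr
    exact (norm_exp_le_exp_norm _).trans (Real.exp_le_exp.2 hnext)

theorem norm_qnest_le_one {j : ℕ} (hD : ∀ i ≥ j, Real.exp 1 ≤ ‖qdenom s lam i‖) (k : ℕ) :
    ‖qnest s lam j k‖ ≤ 1 :=
  (norm_qnest_le hD k).trans (div_le_one_of_le₀ (hD j le_rfl) (norm_nonneg _))

theorem norm_qnest_succ_sub_le {j : ℕ} (hD : ∀ i ≥ j, 2 * Real.exp 1 ≤ ‖qdenom s lam i‖)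
    (k : ℕ) : ‖qnest s lam j (k + 1) - qnest s lam j k‖ ≤ (1 / 2) ^ k := by
  have he : ∀ {j}, (∀ i ≥ j, 2 * Real.exp 1 ≤ ‖qdenom s lam i‖) →
      ∀ i ≥ j, Real.exp 1 ≤ ‖qdenom s lam i‖ := fun h i hi => by
    linarith [h i hi, Real.exp_pos 1]
  induction k generalizing j with
  | zero => simpa [qnest_zero] using norm_qnest_le_one (he hD) 1
  | succ k ih =>
    have hD' : ∀ i ≥ j + 1, 2 * Real.exp 1 ≤ ‖qdenom s lam i‖ := fun i hi => hD i (by omega)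
    have hexp := Complex.norm_exp_sub_exp_le (norm_qnest_le_one (he hD') (k + 1))
      (norm_qnest_le_one (he hD') k)
    have hDj := hD j le_rfl
    rw [qnest_succ j (k + 1), qnest_succ j k, ← sub_div, norm_div,
      div_le_iff₀ (by linarith [Real.exp_pos 1]), pow_succ]
    calc _ ≤ Real.exp 1 * (1 / 2) ^ k := hexp.trans (by gcongr; exact ih hD')
      _ ≤ (1 / 2) ^ k * (1 / 2) * ‖qdenom s lam j‖ := by
        nlinarith [pow_pos (one_half_pos (α := ℝ)) k]

-- Continuity of `q_j` needs no assumption on `D_j`: where `D_j = 0` the value is `x / 0 = 0`.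
theorem tendsto_qnest_of_tendsto_succ {j : ℕ} {L : ℂ}
    (hL : Tendsto (fun k => qnest s lam (j + 1) k) atTop (𝓝 L)) :
    Tendsto (fun k => qnest s lam j k) atTop (𝓝 (exp L / qdenom s lam j)) :=
  (tendsto_add_atTop_iff_nat 1).1 ((continuous_exp.tendsto L).comp hL |>.div_const _)

theorem exists_tendsto_qnest_of_le {j : ℕ} (hD : ∀ i ≥ j, 2 * Real.exp 1 ≤ ‖qdenom s lam i‖) :
    ∃ L, Tendsto (fun k => qnest s lam j k) atTop (𝓝 L) :=
  cauchySeq_tendsto_of_complete <| cauchySeq_of_le_geometric (1 / 2) 1 (by norm_num)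
    fun k => by rw [dist_comm, dist_eq_norm, one_mul]; exact norm_qnest_succ_sub_le hD k

theorem exists_tendsto_qnest (hD : ∃ J, ∀ i ≥ J, 2 * Real.exp 1 ≤ ‖qdenom s lam i‖) (j : ℕ) :
    ∃ L, Tendsto (fun k => qnest s lam j k) atTop (𝓝 L) := by
  obtain ⟨J, hJ⟩ := hD
  suffices ∀ m j, J ≤ j + m → ∃ L, Tendsto (fun k => qnest s lam j k) atTop (𝓝 L) from
    this J j (by omega)
  intro m
  induction m with
  | zero => exact fun j hj => exists_tendsto_qnest_of_le fun i hi => hJ i (by omega)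
  | succ m ih =>
    intro j hj
    obtain ⟨L, hL⟩ := ih (j + 1) (by omega)
    exact ⟨_, tendsto_qnest_of_tendsto_succ hL⟩

end Nested

theorem norm_qnest_limit_bounds {s lam L : ℂ} {A : ℝ}
    (hL : Tendsto (fun k => qnest s lam 2 k) atTop (𝓝 L))
    (he : Real.exp 1 ≤ A) (hA : ∀ i ≥ 1, A ≤ ‖qdenom s lam i‖) :
    ‖exp L / qdenom s lam 1‖ ≤ Real.exp 1 / A ∧
      ‖exp L / qdenom s lam 1 * (qdenom s lam 1 - 1) - 1‖ ≤ 3 * Real.exp 1 / A := by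
  have hA0 : 0 < A := (Real.exp_pos 1).trans_le he
  have hD1 : qdenom s lam 1 ≠ 0 := norm_pos_iff.1 (hA0.trans_le (hA 1 le_rfl))
  have hLA : ‖L‖ ≤ Real.exp 1 / A := by
    refine le_of_tendsto hL.norm (Eventually.of_forall fun k => ?_)
    refine (norm_qnest_le (fun i hi => he.trans (hA i (by omega))) k).trans ?_
    gcongr
    exact hA 2 (by norm_num)
  have hL1 : ‖L‖ ≤ 1 := hLA.trans (div_le_one_of_le₀ he hA0.le)
  have hβ : ‖exp L / qdenom s lam 1‖ ≤ Real.exp 1 / A := by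
    rw [norm_div]
    gcongr
    · exact (norm_exp_le_exp_norm L).trans (Real.exp_le_exp.2 hL1)
    · exact hA 1 le_rfl
  refine ⟨hβ, ?_⟩
  have hsplit : exp L / qdenom s lam 1 * (qdenom s lam 1 - 1) - 1 =
      (exp L - 1) - exp L / qdenom s lam 1 := by
    field_simp
    ring
  calc _ ≤ ‖exp L - 1‖ + ‖exp L / qdenom s lam 1‖ := by rw [hsplit]; exact norm_sub_le _ _
    _ ≤ 2 * (Real.exp 1 / A) + Real.exp 1 / A := by
      gcongr
      exact (norm_exp_sub_one_le hL1).trans (by gcongr)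
    _ = 3 * Real.exp 1 / A := by ring

theorem norm_qdenom_ge {lam : ℝ} (hlam : 0 ≤ lam) (s : ℂ) {x : ℝ} {j : ℕ} (hx : x ≤ j) :
    Real.exp (lam * (x - s.re)) - 1 ≤ ‖qdenom s lam j‖ := by
  have h := norm_sub_norm_le (exp (lam * (j - s))) (-1)
  have hre : ((lam : ℂ) * (j - s)).re = lam * (j - s.re) := by simp
  rw [sub_neg_eq_add, norm_neg, norm_one, norm_exp, hre] at h
  refine le_trans ?_ h
  gcongr

theorem exists_forall_two_mul_exp_one_le_norm_qdenom {lam : ℝ} (hlam : 0 < lam) (s : ℂ) :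
    ∃ J, ∀ i ≥ J, 2 * Real.exp 1 ≤ ‖qdenom s lam i‖ := by
  have hgrow : Tendsto (fun j : ℕ => Real.exp (lam * (j - s.re)) - 1) atTop atTop :=
    tendsto_atTop_add_const_right _ _ <| Real.tendsto_exp_atTop.comp <|
      (tendsto_atTop_add_const_right _ _ tendsto_natCast_atTop_atTop).const_mul_atTop hlam
  obtain ⟨J, hJ⟩ := eventually_atTop.1 (hgrow.eventually_ge_atTop (2 * Real.exp 1))
  exact ⟨J, fun i hi => (hJ J le_rfl).trans (norm_qdenom_ge hlam.le s (Nat.cast_le.2 hi))⟩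

theorem exists_forall_re_lt_of_le_of_tendsto {f : ℂ → ℝ} {g : ℝ → ℝ}
    (hg : Tendsto g atBot (𝓝 0)) (hfg : ∀ᶠ x in atBot, ∀ s : ℂ, s.re = x → f s ≤ g x)
    {ε : ℝ} (hε : 0 < ε) : ∃ R, ∀ s : ℂ, s.re < R → f s < ε := by
  obtain ⟨R, hR⟩ := eventually_atBot.1 ((hg.eventually (gt_mem_nhds hε)).and hfg)
  exact ⟨R, fun s hs => ((hR s.re hs.le).2 s rfl).trans_lt (hR s.re hs.le).1⟩

/-- for real λ > 0, β(s,λ) exists for Re s < 1, and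
β(s,λ)·e^{−λ(s−1)} → 1 uniformly as Re s → −∞; in particular β(s,λ) → 0. -/
theorem beta_asymptotic_at_minus_infinity
    (lam : ℝ) (hlam : 0 < lam) :
    ∃ β : ℂ → ℂ,
      (∀ s : ℂ, s.re < 1 →
        Tendsto (fun n => Phi n s (lam : ℂ)) atTop (nhds (β s))) ∧
      (∀ ε : ℝ, 0 < ε → ∃ R : ℝ, ∀ s : ℂ, s.re < R →
        ‖β s * Complex.exp (-(lam : ℂ) * (s - 1)) - 1‖ < ε) ∧
      (∀ ε : ℝ, 0 < ε → ∃ R : ℝ, ∀ s : ℂ, s.re < R → ‖β s‖ < ε) := by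
  choose L hL using fun s : ℂ =>
    exists_tendsto_qnest (exists_forall_two_mul_exp_one_le_norm_qdenom hlam s) 2
  set A : ℝ → ℝ := fun x => Real.exp (lam * (1 - x)) - 1
  have hA : Tendsto A atBot atTop :=
    tendsto_atTop_add_const_right _ _ <| Real.tendsto_exp_atTop.comp <|
      (tendsto_atTop_add_const_left _ _ tendsto_neg_atBot_atTop).const_mul_atTop hlam
  have hbounds : ∀ᶠ x in atBot, ∀ s : ℂ, s.re = x →
      ‖exp (L s) / qdenom s lam 1‖ ≤ Real.exp 1 / A x ∧
      ‖exp (L s) / qdenom s lam 1 * exp (-(lam : ℂ) * (s - 1)) - 1‖ ≤ 3 * Real.exp 1 / A x := by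
    filter_upwards [hA.eventually_ge_atTop (Real.exp 1)] with x hx s rfl
    have hw : exp (-(lam : ℂ) * (s - 1)) = qdenom s lam 1 - 1 := by
      rw [qdenom, add_sub_cancel_right]; push_cast; ring_nf
    rw [hw]
    exact norm_qnest_limit_bounds (hL s) hx fun i hi =>
      norm_qdenom_ge hlam.le s (Nat.one_le_cast.2 hi)
  refine ⟨fun s => exp (L s) / qdenom s lam 1, fun s _ => tendsto_qnest_of_tendsto_succ (hL s),
    fun ε hε => ?_, fun ε hε => ?_⟩
  · exact exists_forall_re_lt_of_le_of_tendsto (tendsto_const_nhds.div_atTop hA)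
      (hbounds.mono fun x h s hs => (h s hs).2) hε
  · exact exists_forall_re_lt_of_le_of_tendsto (tendsto_const_nhds.div_atTop hA)
      (hbounds.mono fun x h s hs => (h s hs).1) hε
end

section
/- Fix λ ∈ ℂ with Re λ > 0 and T₀ ∈ ℝ. Let β : ℂ → ℂ be holomorphic on the half-plane {s : Re s > T₀}, satisfy β(s+1)(1 + e^{−λs}) = e^{β(s)} for all Re s > T₀, and diverge uniformly to infinity: for every M > 0 there exists T' such that |β(s)| ≥ M whenever Re s > T'. Define τ⁰(s) = 0 and τ^{n+1}(s) = Log(1 + τⁿ(s+1)/β(s+1)) − Log(1 + e^{−λs}), where Log is the principal branch of the complex logarithm. Then for every q with e^{−Re λ} < q < 1 there exist T ≥ T₀ and D ≥ 1 such that for all n ≥ 1 and all s with Re s > T: |τⁿ(s) + Log(1 + e^{−λs})| ≤ D · |e^{−λs}| · ∑_{j=1}^{n−1} q^j / ∏_{k=1}^{j} |β(s+k)|. -/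
/-!
Since `τⁿ⁺¹(s) + Log(1 + e^{-λs}) = Log(1 + τⁿ(s+1)/β(s+1))`, the bound follows by induction on
`n` from `|Log(1 + z)| ≤ (1 + δ)|z|` for `|z| ≤ δ ≤ 1/2` and `|e^{-λ(s+1)}| = e^{-Re λ}|e^{-λs}|`:
choosing `(1 + δ)e^{-Re λ} ≤ q` makes `D = 1 + δ` absorb the loss of each step, and `|β| ≥ 2` keeps
the sums `∑ qʲ / ∏ |β(s+k)|` below `1`, so the argument of the logarithm stays small once
`|e^{-λs}| ≤ δ / (1 + δ)`.

That smallness needs `λ` real, and the functional equation forces it: otherwise `e^{-λs} = -1` at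
points of arbitrarily large real part, where the left side vanishes but `e^{β(s)}` does not.
-/

open Complex Filter Topology

noncomputable def tauSeq (lam : ℂ) (β : ℂ → ℂ) : ℕ → ℂ → ℂ
  | 0, _ => 0
  | n + 1, s => Complex.log (1 + tauSeq lam β n (s + 1) / β (s + 1)) -
      Complex.log (1 + Complex.exp (-lam * s))

namespace Finset

theorem prod_Icc_one_succ {M : Type*} [CommMonoid M] (w : ℕ → M) (m : ℕ) :
    ∏ k ∈ Icc 1 (m + 1), w k = w 1 * ∏ k ∈ Icc 1 m, w (k + 1) := by
  induction m with
  | zero => simp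
  | succ m ih =>
    rw [prod_Icc_succ_top (by omega), ih, prod_Icc_succ_top (by omega : 1 ≤ m + 1), mul_assoc]

theorem sum_Icc_pow_div_prod_succ {K : Type*} [Field K] (q : K) (w : ℕ → K) (m : ℕ) :
    ∑ j ∈ Icc 1 (m + 1), q ^ j / ∏ k ∈ Icc 1 j, w k
      = q / w 1 * (1 + ∑ j ∈ Icc 1 m, q ^ j / ∏ k ∈ Icc 1 j, w (k + 1)) := by
  induction m with
  | zero => simp
  | succ m ih =>
    rw [sum_Icc_succ_top (by omega : 1 ≤ m + 1 + 1), ih, sum_Icc_succ_top (by omega : 1 ≤ m + 1),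
      prod_Icc_one_succ, pow_succ', ← div_mul_div_comm]
    ring

theorem sum_Icc_inv_two_pow (m : ℕ) : ∑ j ∈ Icc 1 m, (2⁻¹ : ℝ) ^ j = 1 - 2⁻¹ ^ m := by
  induction m with
  | zero => simp
  | succ m ih =>
    rw [sum_Icc_succ_top (by omega), ih]
    ring

theorem sum_Icc_pow_div_prod_nonneg {q : ℝ} (hq : 0 ≤ q) {w : ℕ → ℝ} (hw : ∀ k, 0 ≤ w k)
    (m : ℕ) : 0 ≤ ∑ j ∈ Icc 1 m, q ^ j / ∏ k ∈ Icc 1 j, w k :=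
  sum_nonneg fun _ _ => div_nonneg (pow_nonneg hq _) (prod_nonneg fun k _ => hw k)

theorem sum_Icc_pow_div_prod_le_one {q : ℝ} (hq0 : 0 ≤ q) (hq1 : q ≤ 1) {w : ℕ → ℝ}
    (hw : ∀ k, 2 ≤ w k) (m : ℕ) : ∑ j ∈ Icc 1 m, q ^ j / ∏ k ∈ Icc 1 j, w k ≤ 1 := by
  calc ∑ j ∈ Icc 1 m, q ^ j / ∏ k ∈ Icc 1 j, w k
      ≤ ∑ j ∈ Icc 1 m, (2⁻¹ : ℝ) ^ j := by
        refine sum_le_sum fun j _ => ?_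
        have h2j : (2 : ℝ) ^ j ≤ ∏ k ∈ Icc 1 j, w k := by
          simpa using prod_le_prod (s := Icc 1 j) (fun _ _ => zero_le_two) (fun k _ => hw k)
        rw [inv_pow, ← one_div]
        exact div_le_div₀ zero_le_one (pow_le_one₀ hq0 hq1) (by positivity) h2j
    _ ≤ 1 := by rw [sum_Icc_inv_two_pow]; exact sub_le_self _ (by positivity)

end Finset

theorem Complex.norm_log_one_add_le_of_norm_le {z : ℂ} {δ : ℝ} (hδ : δ ≤ 1 / 2) (hz : ‖z‖ ≤ δ) :
    ‖log (1 + z)‖ ≤ (1 + δ) * ‖z‖ := by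
  have hz1 : ‖z‖ < 1 := by linarith
  have hinv : (1 - ‖z‖)⁻¹ ≤ 2 := by
    rw [inv_le_comm₀ (by linarith) two_pos]; linarith
  calc ‖log (1 + z)‖ ≤ ‖z‖ ^ 2 * (1 - ‖z‖)⁻¹ / 2 + ‖z‖ := norm_log_one_add_le hz1
    _ ≤ ‖z‖ * δ * 2 / 2 + ‖z‖ := by
      have : 0 ≤ δ := (norm_nonneg z).trans hz
      rw [sq]
      gcongr
    _ = (1 + δ) * ‖z‖ := by ring

theorem Complex.norm_exp_neg_mul_add_one (lam s : ℂ) :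
    ‖exp (-lam * (s + 1))‖ = Real.exp (-lam.re) * ‖exp (-lam * s)‖ := by
  rw [mul_add, mul_one, exp_add, norm_mul, mul_comm, norm_exp, neg_re]

theorem Complex.exists_norm_exp_neg_mul_le {lam : ℂ} (hre : 0 < lam.re) (him : lam.im = 0)
    {ε : ℝ} (hε : 0 < ε) : ∃ T : ℝ, ∀ s : ℂ, T < s.re → ‖exp (-lam * s)‖ ≤ ε := by
  refine ⟨-Real.log ε / lam.re, fun s hs => ?_⟩
  rw [div_lt_iff₀ hre] at hs
  rw [norm_exp, ← Real.exp_log hε]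
  refine Real.exp_le_exp.mpr ?_
  simp only [neg_mul, neg_re, mul_re, him, zero_mul, sub_zero]
  linarith

open ComplexConjugate in
theorem Complex.exists_re_gt_exp_neg_mul_eq_neg_one {lam : ℂ} (him : lam.im ≠ 0) (T₀ : ℝ) :
    ∃ s : ℂ, T₀ < s.re ∧ exp (-lam * s) = -1 := by
  wlog hneg : lam.im < 0 generalizing lam
  · obtain ⟨s, hs, he⟩ := this (lam := conj lam) (by simpa using him)
      (by simpa using lt_of_le_of_ne (not_lt.mp hneg) (Ne.symm him))
    refine ⟨conj s, by simpa using hs, ?_⟩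
    rw [← conj_conj lam, ← map_neg, ← map_mul, exp_conj, he, map_neg, map_one]
  have hN : 0 < normSq lam := normSq_pos.mpr fun h => him (by simp [h])
  have hc : 0 < Real.pi * -lam.im / normSq lam :=
    div_pos (mul_pos Real.pi_pos (neg_pos.mpr hneg)) hN
  obtain ⟨n, hn⟩ := exists_nat_gt (T₀ / (Real.pi * -lam.im / normSq lam))
  refine ⟨-(Real.pi * I + n * (2 * Real.pi * I)) / lam, ?_, ?_⟩
  · have hre : (-(Real.pi * I + n * (2 * Real.pi * I)) / lam).re
        = (2 * n + 1) * (Real.pi * -lam.im / normSq lam) := by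
      simp [div_re]; ring
    rw [hre]
    rw [div_lt_iff₀ hc] at hn
    nlinarith
  · have hlam : lam ≠ 0 := fun h => him (by simp [h])
    rw [neg_mul, mul_div_cancel₀ _ hlam, neg_neg, exp_add, exp_pi_mul_I, exp_nat_mul_two_pi_mul_I,
      mul_one]

section TauSeq

variable {lam : ℂ} {β : ℂ → ℂ}

theorem tauSeq_succ_add_log (n : ℕ) (s : ℂ) :
    tauSeq lam β (n + 1) s + log (1 + exp (-lam * s)) =
      log (1 + tauSeq lam β n (s + 1) / β (s + 1)) :=
  sub_add_cancel _ _

theorem norm_tauSeq_add_log_le {q δ T : ℝ} (hδ0 : 0 ≤ δ) (hδ : δ ≤ 1 / 2)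
    (hq : (1 + δ) * Real.exp (-lam.re) ≤ q) (hq1 : q ≤ 1)
    (hexp : ∀ s : ℂ, T < s.re → ‖exp (-lam * s)‖ ≤ δ / (1 + δ))
    (hβ : ∀ s : ℂ, T < s.re → 2 ≤ ‖β s‖) {n : ℕ} (hn : 1 ≤ n) {s : ℂ} (hs : T < s.re) :
    ‖tauSeq lam β n s + log (1 + exp (-lam * s))‖ ≤
      (1 + δ) * ‖exp (-lam * s)‖ *
        ∑ j ∈ Finset.Icc 1 (n - 1), q ^ j / ∏ k ∈ Finset.Icc 1 j, ‖β (s + k)‖ := by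
  induction n, hn using Nat.le_induction generalizing s with
  | base => simp [tauSeq]
  | succ n hn ih =>
    set μ := 1 + δ
    have hμ : 1 ≤ μ := by linarith
    have hs1 : T < (s + 1).re := by simp only [add_re, one_re]; linarith
    have hβ1 : 2 ≤ ‖β (s + 1)‖ := hβ _ hs1
    have hq0 : 0 ≤ q := le_trans (by positivity) hq
    set E := ‖exp (-lam * (s + 1))‖
    have hE : E ≤ δ / μ := hexp _ hs1
    have hEμ : μ * E ≤ δ := by rwa [le_div_iff₀' (by linarith)] at hE
    set S := ∑ j ∈ Finset.Icc 1 (n - 1), q ^ j / ∏ k ∈ Finset.Icc 1 j, ‖β (s + 1 + k)‖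
    have hw : ∀ k : ℕ, 2 ≤ ‖β (s + 1 + k)‖ := fun k =>
      hβ _ (by simp only [add_re, one_re, natCast_re]; linarith [k.cast_nonneg (α := ℝ)])
    have hS0 : 0 ≤ S :=
      Finset.sum_Icc_pow_div_prod_nonneg hq0 (fun k => (zero_le_two).trans (hw k)) _
    have hS1 : S ≤ 1 := Finset.sum_Icc_pow_div_prod_le_one hq0 hq1 hw _
    have hL : ‖log (1 + exp (-lam * (s + 1)))‖ ≤ μ * E :=
      norm_log_one_add_le_of_norm_le hδ (hE.trans (div_le_self hδ0 hμ))
    have hτ : ‖tauSeq lam β n (s + 1)‖ ≤ μ * E * (S + 1) := by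
      have := norm_sub_le (tauSeq lam β n (s + 1) + log (1 + exp (-lam * (s + 1))))
        (log (1 + exp (-lam * (s + 1))))
      rw [add_sub_cancel_right] at this
      linarith [ih hs1]
    have hz : ‖tauSeq lam β n (s + 1) / β (s + 1)‖ ≤ δ := by
      rw [norm_div, div_le_iff₀ (by linarith)]
      nlinarith [norm_nonneg (exp (-lam * (s + 1)))]
    have hsum : ∑ j ∈ Finset.Icc 1 (n + 1 - 1), q ^ j / ∏ k ∈ Finset.Icc 1 j, ‖β (s + k)‖ =
        q / ‖β (s + 1)‖ * (1 + S) := by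
      obtain ⟨m, rfl⟩ := Nat.exists_eq_add_of_le' hn
      simp only [Nat.add_sub_cancel, Finset.sum_Icc_pow_div_prod_succ, Nat.cast_one, S]
      push_cast
      simp only [add_assoc, add_comm (1 : ℂ)]
    rw [tauSeq_succ_add_log, hsum]
    calc ‖log (1 + tauSeq lam β n (s + 1) / β (s + 1))‖
        ≤ μ * (‖tauSeq lam β n (s + 1)‖ / ‖β (s + 1)‖) := by
          rw [← norm_div]; exact norm_log_one_add_le_of_norm_le hδ hz
      _ ≤ μ * (μ * E * (S + 1) / ‖β (s + 1)‖) := by gcongr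
      _ = μ * Real.exp (-lam.re) * μ * ‖exp (-lam * s)‖ * (S + 1) / ‖β (s + 1)‖ := by
          simp only [E, norm_exp_neg_mul_add_one]; ring
      _ ≤ q * μ * ‖exp (-lam * s)‖ * (S + 1) / ‖β (s + 1)‖ := by gcongr
      _ = μ * ‖exp (-lam * s)‖ * (q / ‖β (s + 1)‖ * (1 + S)) := by ring

end TauSeq

theorem tau_removable_singularity_bound_general
    (lam : ℂ) (hlam : 0 < lam.re) (T₀ : ℝ) (β : ℂ → ℂ)
    (hfe : ∀ s : ℂ, T₀ < s.re →
      β (s + 1) * (1 + Complex.exp (-lam * s)) = Complex.exp (β s))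
    (hdiv : ∀ M : ℝ, 0 < M → ∃ T' : ℝ, ∀ s : ℂ, T' < s.re → M ≤ ‖β s‖) :
    ∀ q : ℝ, Real.exp (-lam.re) < q → q < 1 →
      ∃ T : ℝ, T₀ ≤ T ∧ ∃ D : ℝ, 1 ≤ D ∧
        ∀ n : ℕ, 1 ≤ n → ∀ s : ℂ, T < s.re →
          ‖tauSeq lam β n s + Complex.log (1 + Complex.exp (-lam * s))‖ ≤
            D * ‖Complex.exp (-lam * s)‖ *
              ∑ j ∈ Finset.Icc 1 (n - 1),
                q ^ j / ∏ k ∈ Finset.Icc 1 j, ‖β (s + (k : ℂ))‖ := by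
  intro q hq hq1
  have him : lam.im = 0 := by
    by_contra him
    obtain ⟨s, hs, he⟩ := exists_re_gt_exp_neg_mul_eq_neg_one him T₀
    exact exp_ne_zero _ (by rw [← hfe s hs, he, add_neg_cancel, mul_zero])
  obtain ⟨δ, hδ0, hδ, hδq⟩ : ∃ δ : ℝ, 0 < δ ∧ δ ≤ 1 / 2 ∧ (1 + δ) * Real.exp (-lam.re) ≤ q := by
    have hqe : 1 < q * Real.exp lam.re := by
      simpa [← Real.exp_add] using mul_lt_mul_of_pos_right hq (Real.exp_pos lam.re)
    refine ⟨min (1 / 2) (q * Real.exp lam.re - 1), by positivity, min_le_left _ _, ?_⟩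
    calc (1 + min (1 / 2) (q * Real.exp lam.re - 1)) * Real.exp (-lam.re)
        ≤ q * Real.exp lam.re * Real.exp (-lam.re) := by
          gcongr; linarith [min_le_right (1 / 2 : ℝ) (q * Real.exp lam.re - 1)]
      _ = q := by rw [mul_assoc, ← Real.exp_add, add_neg_cancel, Real.exp_zero, mul_one]
  obtain ⟨T₁, hT₁⟩ := exists_norm_exp_neg_mul_le hlam him (ε := δ / (1 + δ)) (by positivity)
  obtain ⟨T₂, hT₂⟩ := hdiv 2 two_pos
  refine ⟨max T₀ (max T₁ T₂), le_max_left _ _, 1 + δ, by linarith, fun n hn s hs => ?_⟩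
  exact norm_tauSeq_add_log_le hδ0.le hδ hδq hq1.le
    (fun s hs => hT₁ s ((le_max_left _ _).trans_lt ((le_max_right _ _).trans_lt hs)))
    (fun s hs => hT₂ s ((le_max_right _ _).trans_lt ((le_max_right _ _).trans_lt hs))) hn hs

/-- Removable Singularity Theorem: explicit bound on the error terms. -/
theorem tau_removable_singularity_bound
    (lam : ℂ) (hlam : 0 < lam.re) (T₀ : ℝ) (β : ℂ → ℂ)
    (hβ : DifferentiableOn ℂ β {s : ℂ | T₀ < s.re})
    (hfe : ∀ s : ℂ, T₀ < s.re →
      β (s + 1) * (1 + Complex.exp (-lam * s)) = Complex.exp (β s))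
    (hdiv : ∀ M : ℝ, 0 < M → ∃ T' : ℝ, ∀ s : ℂ, T' < s.re → M ≤ ‖β s‖) :
    ∀ q : ℝ, Real.exp (-lam.re) < q → q < 1 →
      ∃ T : ℝ, T₀ ≤ T ∧ ∃ D : ℝ, 1 ≤ D ∧
        ∀ n : ℕ, 1 ≤ n → ∀ s : ℂ, T < s.re →
          ‖tauSeq lam β n s + Complex.log (1 + Complex.exp (-lam * s))‖ ≤
            D * ‖Complex.exp (-lam * s)‖ *
              ∑ j ∈ Finset.Icc 1 (n - 1),
                q ^ j / ∏ k ∈ Finset.Icc 1 j, ‖β (s + (k : ℂ))‖ :=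
  tau_removable_singularity_bound_general lam hlam T₀ β hfe hdiv
end

section
/- Fix a real number λ > 0. Then there exists a sequence (a_k)_{k≥1} of complex numbers such that for every s ∈ ℂ with Re s < 1 the limit β(s,λ) = lim_{n→∞} Φ_n(s,λ) exists and the series ∑_{k=1}^∞ a_k e^{kλs}/k! converges absolutely with β(s,λ) = ∑_{k=1}^∞ a_k e^{kλs}/k!. -/
/-!
Put `x = e^{λs}`; then `Re s < 1` becomes `‖x‖ < e^λ` and `q_{j+1}` becomes
`z ↦ x e^z / (e^{λ(j+1)} + x)`, holomorphic in `x` on that disc. Beyond some level `J` these maps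
are `1/2`-Lipschitz self-maps of the closed unit disc, uniformly in `x`, so the tails of the nest
converge uniformly to a holomorphic function; composing with the first `J` maps, `Φ_n` converges to
a function `g` holomorphic on `‖x‖ < e^λ` with `g 0 = 0`. Its Taylor series at `0` is the
exponential series, with `a_k = g^{(k)}(0)`.
-/

open Complex Filter Topology

section NestFrom

variable {α : Type*} (F : ℕ → α → α)

/-- `nestFrom F j k = F j ∘ F (j + 1) ∘ ⋯ ∘ F (j + k - 1)`. -/
def nestFrom : ℕ → ℕ → α → α
  | _, 0, z => z
  | j, k + 1, z => F j (nestFrom (j + 1) k z)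

theorem nestFrom_add (j k m : ℕ) (z : α) :
    nestFrom F j (k + m) z = nestFrom F j k (nestFrom F (j + k) m z) := by
  induction k generalizing j with
  | zero => rw [zero_add, add_zero]; rfl
  | succ k ih =>
    rw [Nat.add_right_comm, nestFrom, ih, ← add_assoc, add_right_comm, nestFrom]

theorem continuous_nestFrom [TopologicalSpace α] (hF : ∀ j, Continuous (F j)) (j k : ℕ) :
    Continuous (nestFrom F j k) := by
  induction k generalizing j with
  | zero => exact continuous_id
  | succ k ih => exact (hF j).comp (ih (j + 1))

variable {F} {s : Set α} {z₀ : α} {j : ℕ}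

theorem nestFrom_mem (hmaps : ∀ i ≥ j, Set.MapsTo (F i) s s) (hz₀ : z₀ ∈ s) (n : ℕ) :
    nestFrom F j n z₀ ∈ s := by
  induction n generalizing j with
  | zero => exact hz₀
  | succ n ih => exact hmaps j le_rfl (ih fun i hi => hmaps i (by omega))

variable [PseudoMetricSpace α] {K : NNReal} {C : ℝ}

theorem dist_nestFrom_succ_le (hmaps : ∀ i ≥ j, Set.MapsTo (F i) s s)
    (hlip : ∀ i ≥ j, LipschitzOnWith K (F i) s) (hz₀ : z₀ ∈ s) (hC : ∀ i ≥ j, dist (F i z₀) z₀ ≤ C)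
    (n : ℕ) : dist (nestFrom F j (n + 1) z₀) (nestFrom F j n z₀) ≤ C * K ^ n := by
  induction n generalizing j with
  | zero => simpa [nestFrom] using hC j le_rfl
  | succ n ih =>
    have hmaps' : ∀ i ≥ j + 1, Set.MapsTo (F i) s s := fun i hi => hmaps i (by omega)
    calc dist (F j (nestFrom F (j + 1) (n + 1) z₀)) (F j (nestFrom F (j + 1) n z₀))
        ≤ K * dist (nestFrom F (j + 1) (n + 1) z₀) (nestFrom F (j + 1) n z₀) :=
          hlip j le_rfl |>.dist_le_mul _ (nestFrom_mem hmaps' hz₀ _) _ (nestFrom_mem hmaps' hz₀ _)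
      _ ≤ K * (C * K ^ n) := by
          gcongr
          exact ih hmaps' (fun i hi => hlip i (by omega)) (fun i hi => hC i (by omega))
      _ = C * K ^ (n + 1) := by ring

end NestFrom

/-- `qStep lam x j` is `q_{j+1}(s, λ, ·)` in the variable `x = e^{λ s}`. -/
noncomputable def qStep (lam : ℝ) (x : ℂ) (j : ℕ) (z : ℂ) : ℂ :=
  x * exp z / (Real.exp (lam * (j + 1)) + x)

theorem qnest_succ_eq_nestFrom (lam : ℝ) (s : ℂ) (j k : ℕ) :
    qnest s lam (j + 1) k = nestFrom (qStep lam (exp (lam * s))) j k 0 := by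
  induction k generalizing j with
  | zero => rfl
  | succ k ih =>
    have hden : exp (lam * (((j + 1 : ℕ) : ℂ) - s)) = Real.exp (lam * (j + 1)) / exp (lam * s) := by
      push_cast
      rw [mul_sub, exp_sub]
    rw [qnest, nestFrom, ← ih, qStep, hden, div_add_one (exp_ne_zero _), div_div_eq_mul_div,
      mul_comm]

theorem Phi_eq_nestFrom (lam : ℝ) (s : ℂ) (n : ℕ) :
    Phi n s lam = nestFrom (qStep lam (exp (lam * s))) 0 n 0 :=
  qnest_succ_eq_nestFrom lam s 0 n

section qStep

variable {lam r : ℝ} {x z : ℂ} {j : ℕ}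

theorem sub_le_norm_exp_add (hx : ‖x‖ ≤ r) :
    Real.exp (lam * (j + 1)) - r ≤ ‖(Real.exp (lam * (j + 1)) : ℂ) + x‖ := by
  have := norm_sub_norm_le ((Real.exp (lam * (j + 1)) : ℂ)) (-x)
  rw [sub_neg_eq_add, norm_neg, norm_real, Real.norm_of_nonneg (Real.exp_pos _).le] at this
  linarith

theorem ofReal_exp_add_ne_zero (hlam : 0 ≤ lam) (hx : ‖x‖ < Real.exp lam) :
    (Real.exp (lam * (j + 1)) : ℂ) + x ≠ 0 := by
  have hle : Real.exp lam ≤ Real.exp (lam * (j + 1)) := by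
    gcongr
    nlinarith [(j.cast_nonneg : (0 : ℝ) ≤ j)]
  have := sub_le_norm_exp_add (lam := lam) (j := j) (le_refl ‖x‖)
  exact norm_pos_iff.mp (by linarith)

theorem norm_qStep_le (hx : ‖x‖ ≤ r) (hr : r < Real.exp (lam * (j + 1))) (z : ℂ) :
    ‖qStep lam x j z‖ ≤ r * Real.exp ‖z‖ / (Real.exp (lam * (j + 1)) - r) := by
  have hr0 : 0 ≤ r := (norm_nonneg x).trans hx
  rw [qStep, norm_div, norm_mul]
  exact div_le_div₀ (by positivity) (mul_le_mul hx (norm_exp_le_exp_norm z) (norm_nonneg _) hr0)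
    (by linarith) (sub_le_norm_exp_add hx)

theorem norm_qStep_le_half (hx : ‖x‖ ≤ r) (hj : 2 * r * Real.exp 1 + r < Real.exp (lam * (j + 1)))
    (hz : ‖z‖ ≤ 1) : ‖qStep lam x j z‖ ≤ 1 / 2 := by
  have hr : 0 ≤ r := (norm_nonneg x).trans hx
  refine (norm_qStep_le hx (by nlinarith [Real.exp_pos 1]) z).trans ?_
  rw [div_le_iff₀ (by nlinarith [Real.exp_pos 1])]
  nlinarith [Real.exp_le_exp.mpr hz]

theorem hasDerivAt_qStep (z : ℂ) : HasDerivAt (qStep lam x j) (qStep lam x j z) z :=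
  ((hasDerivAt_exp z).const_mul x).div_const _

theorem lipschitzOnWith_qStep (hx : ‖x‖ ≤ r)
    (hj : 2 * r * Real.exp 1 + r < Real.exp (lam * (j + 1))) :
    LipschitzOnWith (1 / 2) (qStep lam x j) (Metric.closedBall 0 1) := by
  refine (convex_closedBall 0 1).lipschitzOnWith_of_nnnorm_deriv_le
    (fun z _ => (hasDerivAt_qStep z).differentiableAt) fun z hz => ?_
  rw [(hasDerivAt_qStep z).deriv, ← NNReal.coe_le_coe, coe_nnnorm]
  exact norm_qStep_le_half hx hj (mem_closedBall_zero_iff.mp hz)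

theorem differentiableOn_nestFrom_qStep (hlam : 0 ≤ lam) {U : Set ℂ}
    (hU : U ⊆ Metric.ball 0 (Real.exp lam)) {h : ℂ → ℂ} (hh : DifferentiableOn ℂ h U) (j k : ℕ) :
    DifferentiableOn ℂ (fun x => nestFrom (qStep lam x) j k (h x)) U := by
  induction k generalizing j with
  | zero => exact hh
  | succ k ih =>
    refine (differentiableOn_id.mul (ih (j + 1)).cexp).div
      (differentiableOn_const _ |>.add differentiableOn_id) fun x hx => ?_
    exact ofReal_exp_add_ne_zero hlam (mem_ball_zero_iff.mp (hU hx))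

end qStep

section Limit

open Metric

variable {lam : ℝ}

theorem exists_forall_ge_lt_exp (hlam : 0 < lam) (c : ℝ) :
    ∃ J : ℕ, ∀ j ≥ J, c < Real.exp (lam * (j + 1)) := by
  have : Tendsto (fun j : ℕ => Real.exp (lam * (j + 1))) atTop atTop :=
    Real.tendsto_exp_atTop.comp <|
      (tendsto_natCast_atTop_atTop.atTop_add tendsto_const_nhds).const_mul_atTop hlam
  exact (this.eventually_gt_atTop c).exists_forall_of_atTop

theorem continuous_qStep (x : ℂ) (j : ℕ) : Continuous (qStep lam x j) :=
  continuous_iff_continuousAt.mpr fun z => (hasDerivAt_qStep z).continuousAt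

theorem nestFrom_qStep_zero (j n : ℕ) : nestFrom (qStep lam 0) j n 0 = 0 := by
  cases n <;> simp [nestFrom, qStep]

theorem norm_nestFrom_qStep_succ_sub_le {r : ℝ} {x : ℂ} (hx : ‖x‖ ≤ r) {J : ℕ}
    (hJ : ∀ j ≥ J, 2 * r * Real.exp 1 + r < Real.exp (lam * (j + 1))) (n : ℕ) :
    ‖nestFrom (qStep lam x) J (n + 1) 0 - nestFrom (qStep lam x) J n 0‖ ≤ (1 / 2) ^ n := by
  have hball : ∀ j ≥ J, ∀ z ∈ closedBall (0 : ℂ) 1, ‖qStep lam x j z‖ ≤ 1 / 2 :=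
    fun j hj z hz => norm_qStep_le_half hx (hJ j hj) (mem_closedBall_zero_iff.mp hz)
  have := dist_nestFrom_succ_le (K := 1 / 2) (C := 1)
    (fun j hj z hz => mem_closedBall_zero_iff.mpr <| (hball j hj z hz).trans (by norm_num))
    (fun j hj => lipschitzOnWith_qStep hx (hJ j hj)) (mem_closedBall_self zero_le_one)
    (fun j hj => by
      rw [dist_zero_right]
      exact (hball j hj 0 (mem_closedBall_self zero_le_one)).trans (by norm_num)) n
  simpa [dist_eq_norm] using this

/-- The tail of the nest converges by the Weierstrass M-test applied to its telescoping series. -/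
theorem exists_differentiableOn_tendsto_nestFrom_tail (hlam : 0 ≤ lam) {J : ℕ}
    (hJ : ∀ j ≥ J, 2 * Real.exp lam * Real.exp 1 + Real.exp lam < Real.exp (lam * (j + 1))) :
    ∃ t : ℂ → ℂ, DifferentiableOn ℂ t (ball 0 (Real.exp lam)) ∧
      ∀ x ∈ ball (0 : ℂ) (Real.exp lam),
        Tendsto (fun n => nestFrom (qStep lam x) J n 0) atTop (𝓝 (t x)) := by
  set T : ℕ → ℂ → ℂ := fun n x => nestFrom (qStep lam x) J n 0
  have hbound : ∀ n, ∀ x ∈ ball (0 : ℂ) (Real.exp lam), ‖T (n + 1) x - T n x‖ ≤ (1 / 2) ^ n :=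
    fun n x hx => norm_nestFrom_qStep_succ_sub_le (mem_ball_zero_iff.mp hx).le hJ n
  have hT : ∀ n, DifferentiableOn ℂ (T n) (ball 0 (Real.exp lam)) := fun n =>
    differentiableOn_nestFrom_qStep hlam subset_rfl (differentiableOn_const 0) J n
  refine ⟨fun x => ∑' n, (T (n + 1) x - T n x),
    differentiableOn_tsum_of_summable_norm summable_geometric_two
      (fun n => (hT (n + 1)).sub (hT n)) isOpen_ball hbound, fun x hx => ?_⟩
  have := (Summable.of_norm_bounded summable_geometric_two fun n => hbound n x hx).hasSum
  have htelescope : ∀ N, ∑ n ∈ Finset.range N, (T (n + 1) x - T n x) = T N x := fun N =>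
    (Finset.sum_range_sub (fun n => T n x) N).trans (sub_zero _)
  simpa only [htelescope] using this.tendsto_sum_nat

theorem exists_differentiableOn_tendsto_nestFrom (hlam : 0 < lam) :
    ∃ g : ℂ → ℂ, DifferentiableOn ℂ g (ball 0 (Real.exp lam)) ∧
      ∀ x ∈ ball (0 : ℂ) (Real.exp lam),
        Tendsto (fun n => nestFrom (qStep lam x) 0 n 0) atTop (𝓝 (g x)) := by
  obtain ⟨J, hJ⟩ := exists_forall_ge_lt_exp hlam (2 * Real.exp lam * Real.exp 1 + Real.exp lam)
  obtain ⟨t, ht, htlim⟩ := exists_differentiableOn_tendsto_nestFrom_tail hlam.le hJ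
  refine ⟨fun x => nestFrom (qStep lam x) 0 J (t x),
    differentiableOn_nestFrom_qStep hlam.le subset_rfl ht 0 J, fun x hx => ?_⟩
  rw [← tendsto_add_atTop_iff_nat J]
  have hcont := continuous_nestFrom _ (continuous_qStep (lam := lam) x) 0 J
  simpa only [add_comm _ J, nestFrom_add, add_zero, Function.comp_def] using
    (hcont.tendsto _).comp (htlim x hx)

end Limit

section Taylor

open Metric Nat

variable {f : ℂ → ℂ} {R : ℝ} {z : ℂ}

theorem hasSum_taylorSeries_of_differentiableOn_ball (hf : DifferentiableOn ℂ f (ball 0 R))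
    (hz : ‖z‖ < R) : HasSum (fun n => iteratedDeriv n f 0 * z ^ n / (n ! : ℂ)) (f z) := by
  refine (Complex.hasSum_taylorSeries_on_ball hf (mem_ball_zero_iff.mpr hz)).congr_fun fun n => ?_
  simp only [sub_zero, smul_eq_mul]
  ring

theorem summable_norm_taylorSeries_of_differentiableOn_ball (hf : DifferentiableOn ℂ f (ball 0 R))
    (hz : ‖z‖ < R) : Summable fun n => ‖iteratedDeriv n f 0 * z ^ n / (n ! : ℂ)‖ := by
  obtain ⟨ρ, hzρ, hρR⟩ := exists_between hz
  have hρ : ‖(ρ : ℂ)‖ = ρ := by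
    rw [norm_real, Real.norm_of_nonneg ((norm_nonneg z).trans hzρ.le)]
  have hsum := (hasSum_taylorSeries_of_differentiableOn_ball hf (hρ.symm ▸ hρR)).tendsto_sum_nat
  simp_rw [mul_div_right_comm _ (_ ^ _)] at hsum ⊢
  exact summable_norm_iff.mpr <| summable_powerSeries_of_norm_lt hsum.cauchySeq (hρ.symm ▸ hzρ)

end Taylor

/-- for real λ > 0 the function β(·, λ) has an exponential series
`β(s,λ) = ∑_{k=1}^∞ a_k e^{kλs}/k!`, absolutely convergent for Re s < 1. -/
theorem beta_exponential_series
    (lam : ℝ) (hlam : 0 < lam) :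
    ∃ a : ℕ → ℂ,
      ∀ s : ℂ, s.re < 1 →
        Summable (fun k : ℕ =>
          ‖a (k + 1) * Complex.exp (((k : ℂ) + 1) * (lam : ℂ) * s) / ((Nat.factorial (k + 1) : ℕ) : ℂ)‖) ∧
        Tendsto (fun n => Phi n s (lam : ℂ)) atTop
          (nhds (∑' k : ℕ,
            a (k + 1) * Complex.exp (((k : ℂ) + 1) * (lam : ℂ) * s) / ((Nat.factorial (k + 1) : ℕ) : ℂ))) := by
  obtain ⟨g, hg, hlim⟩ := exists_differentiableOn_tendsto_nestFrom hlam
  have hg0 : g 0 = 0 := tendsto_nhds_unique (hlim 0 (Metric.mem_ball_self (Real.exp_pos lam)))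
    (by simpa only [nestFrom_qStep_zero] using tendsto_const_nhds)
  refine ⟨fun n => iteratedDeriv n g 0, fun s hs => ?_⟩
  set x := exp (lam * s)
  have hx : ‖x‖ < Real.exp lam := by
    rw [norm_exp, Real.exp_lt_exp, re_ofReal_mul]
    nlinarith
  have hpow : ∀ k : ℕ, exp (((k : ℂ) + 1) * lam * s) = x ^ (k + 1) := fun k => by
    rw [← exp_nat_mul, mul_assoc]
    push_cast
    rfl
  simp_rw [hpow]
  refine ⟨(summable_nat_add_iff 1).mpr (summable_norm_taylorSeries_of_differentiableOn_ball hg hx),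
    ?_⟩
  have hsum := (hasSum_nat_add_iff' 1).mpr (hasSum_taylorSeries_of_differentiableOn_ball hg hx)
  rw [hsum.tsum_eq, Finset.sum_range_one, iteratedDeriv_zero, hg0, zero_mul, zero_div, sub_zero]
  simpa only [Phi_eq_nestFrom] using hlim x (mem_ball_zero_iff.mpr hx)
end
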